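/- Let v = (cos α₀, sin α₀) ∈ S¹ and let α : ℝ → (0, π) and β : ℝ → (π, 2π) be continuous with β − α bounded away from 0 and 2π. Define Ψ : ℝ² → ℝ³ by Ψ(λ, μ) = (λ e^{iα₀} + μ e^{i(α₀+α(λ))}, −μλ sin α(λ)) for μ ≥ 0 and Ψ(λ, μ) = (λ e^{iα₀} + |μ| e^{i(α₀+β(λ))}, −|μ|λ sin β(λ)) for μ ≤ 0 (identifying ℝ² ≅ ℂ for the first two coordinates). Then Ψ is continuous and injective. -/

import Mathlib

open Real

/- Write `v = e(α₀)`. The point `Ψ(λ, μ)` lies at signed distance `s = |μ| sin θ` from the line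
`ℝ v`, where `θ` is `α(λ)` or `β(λ)` according to the sign of `μ`, and its height is `-s λ`.
Since `sin α > 0 > sin β`, `s` is a strictly increasing function of `μ` for fixed `λ`. So if two
points agree, their distances `s` agree; when `s ≠ 0` the heights force equal `λ` and then
monotonicity gives equal `μ`, while `s = 0` forces `μ = 0` on both sides, and then the
coordinate along `v` is `λ`. -/

noncomputable def liftedRayPoint (α₀ l r θ : ℝ) : (ℝ × ℝ) × ℝ :=
  (l • (cos α₀, sin α₀) + r • (cos (α₀ + θ), sin (α₀ + θ)), -(r * l * sin θ))

theorem continuous_liftedRayPoint (α₀ : ℝ) :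
    Continuous fun x : ℝ × ℝ × ℝ => liftedRayPoint α₀ x.1 x.2.1 x.2.2 := by
  unfold liftedRayPoint
  fun_prop

theorem liftedRayPoint_zero (α₀ l θ θ' : ℝ) :
    liftedRayPoint α₀ l 0 θ = liftedRayPoint α₀ l 0 θ' := by
  simp [liftedRayPoint]

theorem liftedRayPoint_dist_line (α₀ l r θ : ℝ) :
    cos α₀ * (liftedRayPoint α₀ l r θ).1.2 - sin α₀ * (liftedRayPoint α₀ l r θ).1.1 =
      r * sin θ := by
  simp only [liftedRayPoint, Prod.smul_mk, Prod.mk_add_mk, smul_eq_mul, sin_add, cos_add]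
  linear_combination r * sin θ * sin_sq_add_cos_sq α₀

theorem liftedRayPoint_coord_line (α₀ l r θ : ℝ) :
    cos α₀ * (liftedRayPoint α₀ l r θ).1.1 + sin α₀ * (liftedRayPoint α₀ l r θ).1.2 =
      l + r * cos θ := by
  simp only [liftedRayPoint, Prod.smul_mk, Prod.mk_add_mk, smul_eq_mul, sin_add, cos_add]
  linear_combination (l + r * cos θ) * sin_sq_add_cos_sq α₀

theorem liftedRayPoint_height (α₀ l r θ : ℝ) :
    (liftedRayPoint α₀ l r θ).2 = -(r * sin θ * l) := by
  simp only [liftedRayPoint]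
  ring

noncomputable def branchAngle (a b : ℝ → ℝ) (l m : ℝ) : ℝ :=
  if 0 ≤ m then a l else b l

theorem continuous_liftedRayPoint_branchAngle (α₀ : ℝ) {a b : ℝ → ℝ} (ha : Continuous a)
    (hb : Continuous b) :
    Continuous fun p : ℝ × ℝ => liftedRayPoint α₀ p.1 |p.2| (branchAngle a b p.1 p.2) := by
  have hsheet {θ : ℝ → ℝ} (hθ : Continuous θ) :
      Continuous fun p : ℝ × ℝ => liftedRayPoint α₀ p.1 |p.2| (θ p.1) :=
    (continuous_liftedRayPoint α₀).comp
      (continuous_fst.prodMk (continuous_snd.abs.prodMk (hθ.comp continuous_fst)))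
  refine (Continuous.if_le (hsheet ha) (hsheet hb) (continuous_const (y := 0)) continuous_snd
    fun p hp => ?_).congr fun p => ?_
  · rw [← hp, abs_zero, liftedRayPoint_zero]
  · unfold branchAngle
    split_ifs <;> rfl

theorem strictMono_abs_mul_sin_branchAngle {a b : ℝ → ℝ} (ha : ∀ l, 0 < sin (a l))
    (hb : ∀ l, sin (b l) < 0) (l : ℝ) :
    StrictMono fun m => |m| * sin (branchAngle a b l m) := by
  refine StrictMonoOn.Iic_union_Ici (a := 0) (fun m hm m' hm' hlt => ?_)
    (fun m hm m' hm' hlt => ?_)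
  · rcases (Set.mem_Iic.mp hm').eq_or_lt with rfl | hneg
    · simp only [branchAngle, abs_of_neg (hlt : m < 0), if_neg (not_le.mpr hlt), abs_zero,
        zero_mul]
      exact mul_neg_of_pos_of_neg (by linarith) (hb l)
    · simp only [branchAngle, abs_of_neg hneg, abs_of_neg (hlt.trans hneg),
        if_neg (not_le.mpr hneg), if_neg (not_le.mpr (hlt.trans hneg))]
      nlinarith [hb l]
  · simp only [branchAngle, abs_of_nonneg (Set.mem_Ici.mp hm), abs_of_nonneg (Set.mem_Ici.mp hm'),
      if_pos (Set.mem_Ici.mp hm), if_pos (Set.mem_Ici.mp hm')]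
    exact mul_lt_mul_of_pos_right hlt (ha l)

theorem injective_liftedRayPoint_branchAngle (α₀ : ℝ) {a b : ℝ → ℝ} (ha : ∀ l, 0 < sin (a l))
    (hb : ∀ l, sin (b l) < 0) :
    Function.Injective fun p : ℝ × ℝ => liftedRayPoint α₀ p.1 |p.2| (branchAngle a b p.1 p.2) := by
  rintro ⟨l, m⟩ ⟨l', m'⟩ h
  set s := fun l m => |m| * sin (branchAngle a b l m) with hs_def
  have hs := congrArg (fun P => cos α₀ * P.1.2 - sin α₀ * P.1.1) h
  have hheight := congrArg Prod.snd h
  have hcoord := congrArg (fun P => cos α₀ * P.1.1 + sin α₀ * P.1.2) h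
  simp only [liftedRayPoint_dist_line, liftedRayPoint_coord_line, liftedRayPoint_height,
    neg_inj] at hs hheight hcoord
  change s l m = s l' m' at hs
  change s l m * l = s l' m' * l' at hheight
  have hsinj := fun l => (strictMono_abs_mul_sin_branchAngle ha hb l).injective
  have hs0 : ∀ l, s l 0 = 0 := fun l => by simp [hs_def]
  by_cases hzero : s l m = 0
  · obtain rfl : m = 0 := hsinj l (hzero.trans (hs0 l).symm)
    obtain rfl : m' = 0 := hsinj l' ((hs.symm.trans hzero).trans (hs0 l').symm)
    simpa using hcoord
  · obtain rfl : l = l' := mul_left_cancel₀ hzero (by rwa [← hs] at hheight)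
    rw [hsinj l hs]

theorem sin_neg_of_mem_Ioo_pi_two_pi {x : ℝ} (hx : x ∈ Set.Ioo π (2 * π)) : sin x < 0 := by
  rw [← sin_sub_two_pi]
  exact sin_neg_of_neg_of_neg_pi_lt (by linarith [hx.2]) (by linarith [hx.1])

theorem stmt_16_general (α₀ : ℝ) (a b : ℝ → ℝ)
    (hacont : Continuous a) (hbcont : Continuous b)
    (ha : ∀ l, a l ∈ Set.Ioo (0 : ℝ) π)
    (hb : ∀ l, b l ∈ Set.Ioo π (2 * π))
    (e : ℝ → ℝ × ℝ) (he : ∀ γ, e γ = (Real.cos γ, Real.sin γ))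
    (Ψ : ℝ × ℝ → (ℝ × ℝ) × ℝ)
    (hΨpos : ∀ l m : ℝ, 0 ≤ m →
      Ψ (l, m) = (l • e α₀ + m • e (α₀ + a l), -(m * l * Real.sin (a l))))
    (hΨneg : ∀ l m : ℝ, m ≤ 0 →
      Ψ (l, m) = (l • e α₀ + |m| • e (α₀ + b l), -(|m| * l * Real.sin (b l)))) :
    Continuous Ψ ∧ Function.Injective Ψ := by
  have hΨ : Ψ = fun p => liftedRayPoint α₀ p.1 |p.2| (branchAngle a b p.1 p.2) := by
    funext ⟨l, m⟩
    by_cases hm : 0 ≤ m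
    · simp only [hΨpos l m hm, he, liftedRayPoint, branchAngle, if_pos hm, abs_of_nonneg hm]
    · simp only [hΨneg l m (le_of_not_ge hm), he, liftedRayPoint, branchAngle, if_neg hm]
  rw [hΨ]
  exact ⟨continuous_liftedRayPoint_branchAngle α₀ hacont hbcont,
    injective_liftedRayPoint_branchAngle α₀ (fun l => sin_pos_of_mem_Ioo (ha l))
      (fun l => sin_neg_of_mem_Ioo_pi_two_pi (hb l))⟩

/-- the parametrization `Ψ` of the surface `Σ_{v,α}` is continuous and
injective. -/
theorem stmt_16 (α₀ : ℝ) (a b : ℝ → ℝ)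
    (hacont : Continuous a) (hbcont : Continuous b)
    (ha : ∀ l, a l ∈ Set.Ioo (0 : ℝ) π)
    (hb : ∀ l, b l ∈ Set.Ioo π (2 * π))
    (hsep : ∃ c C : ℝ, 0 < c ∧ C < 2 * π ∧ ∀ l, c ≤ b l - a l ∧ b l - a l ≤ C)
    (e : ℝ → ℝ × ℝ) (he : ∀ γ, e γ = (Real.cos γ, Real.sin γ))
    (Ψ : ℝ × ℝ → (ℝ × ℝ) × ℝ)
    (hΨpos : ∀ l m : ℝ, 0 ≤ m →
      Ψ (l, m) = (l • e α₀ + m • e (α₀ + a l), -(m * l * Real.sin (a l))))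
    (hΨneg : ∀ l m : ℝ, m ≤ 0 →
      Ψ (l, m) = (l • e α₀ + |m| • e (α₀ + b l), -(|m| * l * Real.sin (b l)))) :
    Continuous Ψ ∧ Function.Injective Ψ :=
  stmt_16_general α₀ a b hacont hbcont ha hb e he Ψ hΨpos hΨneg
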